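/- arXiv:2406.14857 — 3 statements merged into one kernel-verified Lean document; each statement's English description precedes it below -/
import Mathlib

section
/- For every N ≥ 2 and every t ∈ [0,1], the derivative of the interpolating quenched free energy of the chain satisfies (d/dt) f_N^chain(t) = -(βN)^{-1} Σ_{i=1}^{N} E[ log( ⟨e^{β J_i σ_i σ_{i+1}}⟩_{H_{\i}(t)} / ⟨e^{β(ĥ_{i,1}σ_i + ĥ_{i,2}σ_{i+1})}⟩_{H_{\i}(t)} ) ], where H_{\i}(t) is the interpolating Hamiltonian with the i-th interpolated bond term removed (it contains neither J_i, ĥ_{i,1}, ĥ_{i,2} nor M_i) and ⟨·⟩_{H_{\i}(t)} denotes the Gibbs thermal average with respect to H_{\i}(t) at inverse temperature β. -/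
open MeasureTheory Real Filter

/-- Spin value of a Boolean spin variable: `true ↦ 1`, `false ↦ -1`. -/
noncomputable def spin (b : Bool) : ℝ := if b then 1 else -1

/-- Cyclic successor on `Fin N`. -/
def nxt {N : ℕ} (i : Fin N) : Fin N := ⟨(i.val + 1) % N, Nat.mod_lt _ i.pos⟩

/-- Inverse hyperbolic tangent. -/
noncomputable def artanh (x : ℝ) : ℝ := Real.log ((1 + x) / (1 - x)) / 2

/-- Partition function of the one-dimensional chain Ising spin glass with periodic
boundary conditions, at inverse temperature `β`, with couplings `J` and fields `H`. -/
noncomputable def chainZ (N : ℕ) (β : ℝ) (J H : Fin N → ℝ) : ℝ :=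
  ∑ σ : Fin N → Bool,
    Real.exp (β * ((∑ i : Fin N, J i * spin (σ i) * spin (σ (nxt i))) +
      ∑ i : Fin N, H i * spin (σ i)))

/-- Quenched free energy density `f_N^chain` of the chain, with i.i.d. couplings of law `μJ`
and i.i.d. fields of law `μH`. -/
noncomputable def chainF (β : ℝ) (μJ μH : Measure ℝ) (N : ℕ) : ℝ :=
  -(1 / (β * N)) * ∫ ω : (Fin N → ℝ) × (Fin N → ℝ),
    Real.log (chainZ N β ω.1 ω.2) ∂((Measure.pi fun _ : Fin N => μJ).prod
      (Measure.pi fun _ : Fin N => μH))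

/-- The replica symmetric cavity free energy `f_RS^chain`; the coordinates are
`ω.1 = J`, `ω.2.1 = H`, `ω.2.2 = ĥ`. -/
noncomputable def chainRS (β : ℝ) (μJ μH μh : Measure ℝ) : ℝ :=
  -(1 / β) * ∫ ω : ℝ × ℝ × ℝ,
    Real.log (2 * Real.cosh (β * ω.1) * Real.cosh (β * (ω.2.2 + ω.2.1)) /
      Real.cosh (β * ω.2.2)) ∂(μJ.prod (μH.prod μh))

/-- `μh` is a chain cavity measure for `(β, μJ, μH)`: if `J ~ μJ`, `H ~ μH`, `ĥ' ~ μh` are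
independent then `(1/β)·artanh(tanh(βJ)·tanh(β(H+ĥ')))` again has law `μh`. -/
def IsChainCavity (β : ℝ) (μJ μH μh : Measure ℝ) : Prop :=
  Measure.map (fun ω : ℝ × ℝ × ℝ =>
    (1 / β) * _root_.artanh (Real.tanh (β * ω.1) * Real.tanh (β * (ω.2.1 + ω.2.2))))
    (μJ.prod (μH.prod μh)) = μh

/-- Bernoulli weight of an outcome `m : Bool` for a Bernoulli variable with mean `t`. -/
noncomputable def bern (t : ℝ) (m : Bool) : ℝ := if m then t else 1 - t

/-- Partition function of the interpolating chain Hamiltonian for a fixed realization of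
the couplings `J`, fields `H`, cavity fields `h1, h2` and dilution variables `m`:
an active bond (`m i = true`) carries the interaction `J_i σ_i σ_{i+1}`, while an inactive
bond carries the cavity fields `ĥ_{i,1} σ_i + ĥ_{i,2} σ_{i+1}`. -/
noncomputable def chainZt (N : ℕ) (β : ℝ) (J H h1 h2 : Fin N → ℝ) (m : Fin N → Bool) : ℝ :=
  ∑ σ : Fin N → Bool,
    Real.exp (β * ((∑ i : Fin N,
      (if m i then J i * spin (σ i) * spin (σ (nxt i))
        else h1 i * spin (σ i) + h2 i * spin (σ (nxt i)))) +
      ∑ i : Fin N, H i * spin (σ i)))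

/-- Interpolating quenched free energy `f_N^chain(t)` of the chain: the expectation over
the i.i.d. Bernoulli dilution variables `M_i` with mean `t` is written as a weighted sum,
and the expectation over `J, H, ĥ_{·,1}, ĥ_{·,2}` as an integral with respect to the
product measure (coordinates `ω.1 = J`, `ω.2.1 = H`, `ω.2.2.1 = ĥ_{·,1}`,
`ω.2.2.2 = ĥ_{·,2}`). -/
noncomputable def chainFt (β : ℝ) (μJ μH μh : Measure ℝ) (N : ℕ) (t : ℝ) : ℝ :=
  -(1 / (β * N)) * ∫ ω : (Fin N → ℝ) × (Fin N → ℝ) × (Fin N → ℝ) × (Fin N → ℝ),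
    ∑ m : Fin N → Bool, (∏ i : Fin N, bern t (m i)) *
      Real.log (chainZt N β ω.1 ω.2.1 ω.2.2.1 ω.2.2.2 m)
    ∂((Measure.pi fun _ : Fin N => μJ).prod ((Measure.pi fun _ : Fin N => μH).prod
      ((Measure.pi fun _ : Fin N => μh).prod (Measure.pi fun _ : Fin N => μh))))

/-- Weighted sum `∑_σ g(σ) e^{-β H_{\i}(t)(σ)}` for the interpolating chain Hamiltonian
with the `i`-th interpolated bond term removed (it contains neither `J_i`, `ĥ_{i,1}`,
`ĥ_{i,2}` nor `M_i`). -/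
noncomputable def chainCutW (N : ℕ) (β : ℝ) (J H h1 h2 : Fin N → ℝ) (m : Fin N → Bool)
    (i : Fin N) (g : (Fin N → Bool) → ℝ) : ℝ :=
  ∑ σ : Fin N → Bool, g σ *
    Real.exp (β * ((∑ j ∈ Finset.univ.erase i,
      (if m j then J j * spin (σ j) * spin (σ (nxt j))
        else h1 j * spin (σ j) + h2 j * spin (σ (nxt j)))) +
      ∑ j : Fin N, H j * spin (σ j)))

/-- Gibbs thermal average `⟨g⟩_{H_{\i}(t)}` with respect to the interpolating chain
Hamiltonian with the `i`-th interpolated bond term removed. -/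
noncomputable def chainCutAvg (N : ℕ) (β : ℝ) (J H h1 h2 : Fin N → ℝ) (m : Fin N → Bool)
    (i : Fin N) (g : (Fin N → Bool) → ℝ) : ℝ :=
  chainCutW N β J H h1 h2 m i g / chainCutW N β J H h1 h2 m i (fun _ => 1)

/-! The Bernoulli weights make `chainFt` a polynomial in `t` whose coefficients are the quenched
free energies `∫ log Z_m` of the dilution patterns `m`; these are finite because `|log Z_m|` is
dominated by `log 2^N + |β| ∑ (|J_i| + |H_i| + |ĥ_{i,1}| + |ĥ_{i,2}|)`. Differentiating the weight
of the `i`-th Bernoulli variable pairs each pattern with its flip at `i`, so the derivative is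
the average over `M` of `log Z_{M[i ↦ 1]} - log Z_{M[i ↦ 0]}`. Both partition functions are Gibbs
averages of the `i`-th bond term under `H_{\i}(t)` times the same normalisation, which cancels in
the ratio. -/

open Finset Function

section BernoulliWeights

variable {ι : Type*} [Fintype ι] [DecidableEq ι]

theorem sum_eq_sum_ite_update (i : ι) (F : (ι → Bool) → ℝ) :
    ∑ m, F m = ∑ m, if m i then F (update m i true) + F (update m i false) else 0 := by
  have hflip : ∑ m, (if m i then 0 else F m) = ∑ m, if m i then F (update m i false) else 0 :=
    Fintype.sum_bijective (fun m => update m i !(m i)) (Involutive.bijective fun m => by simp) _ _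
      fun m => by
        cases h : m i
        · simp only [update_self, update_idem, Bool.not_false, if_true, Bool.false_eq_true,
            if_false]
          rw [← h, update_eq_self]
        · simp
  calc ∑ m, F m = ∑ m, ((if m i then F m else 0) + if m i then 0 else F m) :=
        sum_congr rfl fun m _ => by split_ifs <;> simp
    _ = _ := by
      rw [sum_add_distrib, hflip, ← sum_add_distrib]
      refine sum_congr rfl fun m _ => ?_
      split_ifs with h
      · rw [← h, update_eq_self]
      · simp

theorem prod_erase_update {M : Type*} [CommMonoid M] (f : Bool → M) (m : ι → Bool) (i : ι)
    (b : Bool) : ∏ j ∈ univ.erase i, f (update m i b j) = ∏ j ∈ univ.erase i, f (m j) :=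
  prod_congr rfl fun j hj => by rw [update_of_ne (ne_of_mem_erase hj)]

theorem hasDerivAt_bern (b : Bool) (t : ℝ) :
    HasDerivAt (fun s => bern s b) (if b then 1 else -1) t := by
  cases b
  · simpa [bern] using (hasDerivAt_id t).const_sub 1
  · simpa [bern] using hasDerivAt_id' t

theorem hasDerivAt_sum_prod_bern_mul (C : (ι → Bool) → ℝ) (t : ℝ) :
    HasDerivAt (fun s => ∑ m, (∏ j, bern s (m j)) * C m)
      (∑ i, ∑ m, (∏ j, bern t (m j)) * (C (update m i true) - C (update m i false))) t := by
  have hprod (m : ι → Bool) := HasDerivAt.fun_finsetProd (u := univ)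
    (fun j _ => hasDerivAt_bern (m j) t)
  refine (HasDerivAt.fun_sum fun m _ => (hprod m).mul_const (C m)).congr_deriv ?_
  simp only [smul_eq_mul, sum_mul]
  rw [sum_comm]
  refine sum_congr rfl fun i _ => ?_
  have hprod_update (m : ι → Bool) (b : Bool) :
      ∏ j, bern t (update m i b j) = bern t b * ∏ j ∈ univ.erase i, bern t (m j) := by
    rw [← mul_prod_erase univ _ (mem_univ i), update_self, prod_erase_update]
  refine (sum_eq_sum_ite_update i _).trans (Eq.trans ?_ (sum_eq_sum_ite_update i _).symm)
  refine sum_congr rfl fun m _ => if_congr Iff.rfl ?_ rfl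
  simp only [hprod_update, prod_erase_update, update_self, update_idem]
  simp only [bern, if_true, Bool.false_eq_true, if_false]
  ring

end BernoulliWeights

theorem abs_log_sum_exp_le {α : Type*} [Fintype α] [Nonempty α] (E : α → ℝ) {B : ℝ}
    (hE : ∀ a, |E a| ≤ B) : |log (∑ a, exp (E a))| ≤ log (Fintype.card α) + B := by
  obtain ⟨a₀⟩ := ‹Nonempty α›
  have hcard : (1 : ℝ) ≤ Fintype.card α := by exact_mod_cast Fintype.card_pos
  have hB : 0 ≤ B := (abs_nonneg _).trans (hE a₀)
  have hlower : exp (-B) ≤ ∑ a, exp (E a) :=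
    (exp_le_exp.2 (neg_le_of_abs_le (hE a₀))).trans
      (single_le_sum (fun a _ => (exp_pos (E a)).le) (mem_univ a₀))
  have hupper : ∑ a, exp (E a) ≤ Fintype.card α * exp B := by
    simpa using sum_le_sum fun a (_ : a ∈ univ) => exp_le_exp.2 (le_of_abs_le (hE a))
  have hZ : 0 < ∑ a, exp (E a) := (exp_pos _).trans_le hlower
  rw [abs_le]
  constructor
  · have := log_le_log (exp_pos _) hlower
    rw [log_exp] at this
    linarith [log_nonneg hcard]
  · simpa [log_mul (by positivity : (Fintype.card α : ℝ) ≠ 0) (exp_pos B).ne'] using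
      log_le_log hZ hupper

section Chain

variable {N : ℕ}

noncomputable def chainBond (J h1 h2 : Fin N → ℝ) (σ : Fin N → Bool) (i : Fin N) (b : Bool) : ℝ :=
  if b then J i * spin (σ i) * spin (σ (nxt i)) else h1 i * spin (σ i) + h2 i * spin (σ (nxt i))

theorem abs_spin (b : Bool) : |spin b| = 1 := by cases b <;> simp [spin]

theorem abs_chainBond_le (J h1 h2 : Fin N → ℝ) (σ : Fin N → Bool) (i : Fin N) (b : Bool) :
    |chainBond J h1 h2 σ i b| ≤ |J i| + |h1 i| + |h2 i| := by
  cases b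
  · rw [chainBond, if_neg Bool.false_ne_true]
    refine (abs_add_le _ _).trans ?_
    simp only [abs_mul, abs_spin, mul_one]
    linarith [abs_nonneg (J i)]
  · simp only [chainBond, if_true, abs_mul, abs_spin, mul_one]
    linarith [abs_nonneg (h1 i), abs_nonneg (h2 i)]

theorem abs_log_chainZt_le (β : ℝ) (J H h1 h2 : Fin N → ℝ) (m : Fin N → Bool) :
    |log (chainZt N β J H h1 h2 m)| ≤
      log (Fintype.card (Fin N → Bool)) + |β| * ∑ i, (|J i| + |H i| + |h1 i| + |h2 i|) := by
  refine abs_log_sum_exp_le _ fun σ => ?_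
  rw [abs_mul]
  refine mul_le_mul_of_nonneg_left ?_ (abs_nonneg β)
  refine (abs_add_le _ _).trans ?_
  refine (add_le_add (abs_sum_le_sum_abs _ _) (abs_sum_le_sum_abs _ _)).trans ?_
  rw [← sum_add_distrib]
  refine sum_le_sum fun i _ => ?_
  have := abs_chainBond_le J h1 h2 σ i (m i)
  rw [abs_mul, abs_spin, mul_one]
  unfold chainBond at this
  linarith

theorem chainCutW_exp_chainBond (β : ℝ) (J H h1 h2 : Fin N → ℝ) (m : Fin N → Bool) (i : Fin N)
    (b : Bool) :
    chainCutW N β J H h1 h2 m i (fun σ => exp (β * chainBond J h1 h2 σ i b)) =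
      chainZt N β J H h1 h2 (update m i b) := by
  refine sum_congr rfl fun σ _ => ?_
  rw [← exp_add, ← mul_add, ← add_assoc]
  congr 3
  rw [← add_sum_erase _ _ (mem_univ i), update_self]
  exact congrArg _ (sum_congr rfl fun j hj => by rw [update_of_ne (ne_of_mem_erase hj)])

theorem log_chainCutAvg_div (β : ℝ) (J H h1 h2 : Fin N → ℝ) (m : Fin N → Bool) (i : Fin N) :
    log (chainCutAvg N β J H h1 h2 m i (fun σ => exp (β * chainBond J h1 h2 σ i true)) /
        chainCutAvg N β J H h1 h2 m i (fun σ => exp (β * chainBond J h1 h2 σ i false))) =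
      log (chainZt N β J H h1 h2 (update m i true)) -
        log (chainZt N β J H h1 h2 (update m i false)) := by
  have hW : chainCutW N β J H h1 h2 m i (fun _ => 1) ≠ 0 :=
    (sum_pos (fun σ _ => by simpa using exp_pos _) univ_nonempty).ne'
  have hZ (b : Bool) : chainZt N β J H h1 h2 (update m i b) ≠ 0 :=
    (sum_pos (fun σ _ => exp_pos _) univ_nonempty).ne'
  rw [chainCutAvg, chainCutAvg, chainCutW_exp_chainBond, chainCutW_exp_chainBond,
    div_div_div_cancel_right₀ hW, log_div (hZ true) (hZ false)]

noncomputable abbrev chainDisorderLaw (μJ μH μh : Measure ℝ) (N : ℕ) :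
    Measure ((Fin N → ℝ) × (Fin N → ℝ) × (Fin N → ℝ) × (Fin N → ℝ)) :=
  (Measure.pi fun _ : Fin N => μJ).prod ((Measure.pi fun _ : Fin N => μH).prod
    ((Measure.pi fun _ : Fin N => μh).prod (Measure.pi fun _ : Fin N => μh)))

theorem continuous_chainZt (β : ℝ) (m : Fin N → Bool) :
    Continuous fun ω : (Fin N → ℝ) × (Fin N → ℝ) × (Fin N → ℝ) × (Fin N → ℝ) =>
      chainZt N β ω.1 ω.2.1 ω.2.2.1 ω.2.2.2 m := by
  unfold chainZt
  refine continuous_finsetSum _ fun σ _ => continuous_exp.comp (continuous_const.mul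
    ((continuous_finsetSum _ fun i _ => ?_).add (by fun_prop)))
  exact continuous_if_const _ (fun _ => by fun_prop) fun _ => by fun_prop

theorem integrable_log_chainZt (β : ℝ) {μJ μH μh : Measure ℝ} [IsFiniteMeasure μJ]
    [IsFiniteMeasure μH] [IsFiniteMeasure μh] (hJ : Integrable (fun x : ℝ => x) μJ)
    (hH : Integrable (fun x : ℝ => x) μH) (hh : Integrable (fun x : ℝ => x) μh)
    (m : Fin N → Bool) :
    Integrable (fun ω => log (chainZt N β ω.1 ω.2.1 ω.2.2.1 ω.2.2.2 m))
      (chainDisorderLaw μJ μH μh N) := by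
  have habs {μ : Measure ℝ} [IsFiniteMeasure μ] (hμ : Integrable (fun x : ℝ => x) μ)
      (i : Fin N) : Integrable (fun x : Fin N → ℝ => |x i|) (Measure.pi fun _ => μ) :=
    integrable_comp_eval hμ.abs
  have hbound : Integrable (fun ω : (Fin N → ℝ) × (Fin N → ℝ) × (Fin N → ℝ) × (Fin N → ℝ) =>
      |β| * ∑ i, (|ω.1 i| + |ω.2.1 i| + |ω.2.2.1 i| + |ω.2.2.2 i|))
      (chainDisorderLaw μJ μH μh N) :=
    (integrable_finsetSum _ fun i _ => ((((habs hJ i).comp_fst _).add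
      (((habs hH i).comp_fst _).comp_snd _)).add
      ((((habs hh i).comp_fst _).comp_snd _).comp_snd _)).add
      ((((habs hh i).comp_snd _).comp_snd _).comp_snd _)).const_mul _
  refine ((integrable_const (log (Fintype.card (Fin N → Bool)))).add hbound).mono'
    (measurable_log.comp (continuous_chainZt β m).measurable).aestronglyMeasurable
    (.of_forall fun ω => ?_)
  exact abs_log_chainZt_le β ω.1 ω.2.1 ω.2.2.1 ω.2.2.2 m

end Chain

theorem chain_interpolation_deriv_general (β : ℝ) (μJ μH μh : Measure ℝ)
    [IsProbabilityMeasure μJ] [IsProbabilityMeasure μH] [IsProbabilityMeasure μh]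
    (hJ : Integrable (fun x : ℝ => x) μJ) (hH : Integrable (fun x : ℝ => x) μH)
    (hh : Integrable (fun x : ℝ => x) μh) :
    ∀ N : ℕ, 2 ≤ N → ∀ t ∈ Set.Icc (0:ℝ) 1,
      deriv (chainFt β μJ μH μh N) t =
        -(1 / (β * N)) * ∑ i : Fin N,
          ∫ ω : (Fin N → ℝ) × (Fin N → ℝ) × (Fin N → ℝ) × (Fin N → ℝ),
            ∑ m : Fin N → Bool, (∏ j : Fin N, bern t (m j)) *
              Real.log
                (chainCutAvg N β ω.1 ω.2.1 ω.2.2.1 ω.2.2.2 m i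
                    (fun σ => Real.exp (β * (ω.1 i * spin (σ i) * spin (σ (nxt i))))) /
                  chainCutAvg N β ω.1 ω.2.1 ω.2.2.1 ω.2.2.2 m i
                    (fun σ => Real.exp (β * (ω.2.2.1 i * spin (σ i) +
                      ω.2.2.2 i * spin (σ (nxt i))))))
          ∂((Measure.pi fun _ : Fin N => μJ).prod ((Measure.pi fun _ : Fin N => μH).prod
            ((Measure.pi fun _ : Fin N => μh).prod (Measure.pi fun _ : Fin N => μh)))) := by
  intro N _ t _
  have hint := integrable_log_chainZt (N := N) β hJ hH hh
  set C : (Fin N → Bool) → ℝ := fun m =>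
    ∫ ω, log (chainZt N β ω.1 ω.2.1 ω.2.2.1 ω.2.2.2 m) ∂chainDisorderLaw μJ μH μh N
  have hF : chainFt β μJ μH μh N = fun s => -(1 / (β * N)) * ∑ m, (∏ j, bern s (m j)) * C m := by
    funext s
    rw [chainFt, integral_finsetSum _ fun m _ => (hint m).const_mul _]
    simp only [integral_const_mul, C]
  rw [hF, ((hasDerivAt_sum_prod_bern_mul C t).const_mul _).deriv]
  congr 1
  refine sum_congr rfl fun i _ => ?_
  calc ∑ m, (∏ j, bern t (m j)) * (C (update m i true) - C (update m i false))
      = ∫ ω, ∑ m, (∏ j, bern t (m j)) *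
          (log (chainZt N β ω.1 ω.2.1 ω.2.2.1 ω.2.2.2 (update m i true)) -
            log (chainZt N β ω.1 ω.2.1 ω.2.2.1 ω.2.2.2 (update m i false)))
          ∂chainDisorderLaw μJ μH μh N := by
        rw [integral_finsetSum]
        · simp only [integral_const_mul, integral_sub (hint _) (hint _), C]
        · exact fun m _ => ((hint _).sub (hint _)).const_mul _
    _ = _ := integral_congr_ae (.of_forall fun ω => sum_congr rfl fun m _ => by
        rw [← log_chainCutAvg_div]
        -- the statement's two observables are `chainBond … i true` and `… i false`, unfolded
        rfl)

theorem chain_interpolation_deriv (β : ℝ) (hβ : 0 < β) (μJ μH μh : Measure ℝ)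
    [IsProbabilityMeasure μJ] [IsProbabilityMeasure μH] [IsProbabilityMeasure μh]
    (hsym : Measure.map (fun x : ℝ => -x) μJ = μJ)
    (hJ : Integrable (fun x : ℝ => x) μJ) (hH : Integrable (fun x : ℝ => x) μH)
    (hh : Integrable (fun x : ℝ => x) μh) :
    ∀ N : ℕ, 2 ≤ N → ∀ t ∈ Set.Icc (0:ℝ) 1,
      deriv (chainFt β μJ μH μh N) t =
        -(1 / (β * N)) * ∑ i : Fin N,
          ∫ ω : (Fin N → ℝ) × (Fin N → ℝ) × (Fin N → ℝ) × (Fin N → ℝ),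
            ∑ m : Fin N → Bool, (∏ j : Fin N, bern t (m j)) *
              Real.log
                (chainCutAvg N β ω.1 ω.2.1 ω.2.2.1 ω.2.2.2 m i
                    (fun σ => Real.exp (β * (ω.1 i * spin (σ i) * spin (σ (nxt i))))) /
                  chainCutAvg N β ω.1 ω.2.1 ω.2.2.1 ω.2.2.2 m i
                    (fun σ => Real.exp (β * (ω.2.2.1 i * spin (σ i) +
                      ω.2.2.2 i * spin (σ (nxt i))))))
          ∂((Measure.pi fun _ : Fin N => μJ).prod ((Measure.pi fun _ : Fin N => μH).prod
            ((Measure.pi fun _ : Fin N => μh).prod (Measure.pi fun _ : Fin N => μh)))) :=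
  chain_interpolation_deriv_general β μJ μH μh hJ hH hh
end

section
/- Let T be a real random variable whose law is symmetric (invariant under x ↦ -x), satisfying |T| < 1 almost surely and E[-log(1-|T|)] < ∞. Let U_1, U_2 be i.i.d. random variables with values in [-1,1] and common law ν_U, let V_1, V_2 be i.i.d. random variables with values in [-1,1] and common law ν_V, and let T, U_1, U_2, V_1, V_2 be mutually independent. Then E[log(1 + T U_1 U_2)] - 2 E[log(1 + T U_1 V_1)] + E[log(1 + T V_1 V_2)] = - Σ_{n=1}^{∞} (1/(2n)) E[T^{2n}] (E[U_1^{2n}] - E[V_1^{2n}])^2, and in particular this quantity is ≤ 0. -/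
/-!
Expand `log (1 + y) = ∑ (-1)ⁿ yⁿ⁺¹ / (n + 1)` at `y = T W` with `|W| ≤ 1`. The terms are dominated
by `|T|ⁿ⁺¹ / (n + 1)`, whose sum `-log (1 - |T|)` is integrable, so the expectation may be taken
termwise, and independence splits the `n`-th term into `E[Tⁿ⁺¹] E[Wⁿ⁺¹]`. In the combination
`E log (1 + T U₁ U₂) - 2 E log (1 + T U₁ V₁) + E log (1 + T V₁ V₂)` the `n`-th term becomes
`(-1)ⁿ / (n + 1) · E[Tⁿ⁺¹] (E[Uⁿ⁺¹] - E[Vⁿ⁺¹])²`. The odd moments of the symmetric `T` vanish, so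
only odd `n` survive, and there `(-1)ⁿ = -1`.
-/

open MeasureTheory Real

theorem hasSum_log_one_add_of_abs_lt_one {y : ℝ} (hy : |y| < 1) :
    HasSum (fun n : ℕ => (-1) ^ n * y ^ (n + 1) / (n + 1)) (log (1 + y)) := by
  have h := (hasSum_pow_div_log_of_abs_lt_one (x := -y) (by rwa [abs_neg])).neg
  rw [neg_neg, sub_neg_eq_add] at h
  refine h.congr_fun fun n => ?_
  rw [neg_pow]
  ring

theorem integral_pow_eq_zero_of_odd (μ : Measure ℝ) [μ.IsNegInvariant] {n : ℕ} (hn : Odd n) :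
    ∫ x, x ^ n ∂μ = 0 := by
  have h := integral_neg_eq_self (fun x => x ^ n) μ
  simp only [hn.neg_pow, integral_neg] at h
  linarith

theorem HasSum.comp_two_mul_add_one_of_even_eq_zero {M : Type*} [AddCommMonoid M]
    [TopologicalSpace M] {f : ℕ → M} {a : M} (hf : HasSum f a) (h : ∀ k, f (2 * k) = 0) :
    HasSum (fun k => f (2 * k + 1)) a := by
  refine (Function.Injective.hasSum_iff (fun j k hjk => by omega) fun n hn => ?_).mpr hf
  obtain ⟨k, rfl | rfl⟩ := Nat.even_or_odd' n
  · exact h k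
  · exact absurd ⟨k, rfl⟩ hn

theorem hasSum_integral_log_one_add_mul {Ω : Type*} [MeasurableSpace Ω] {μ : Measure ℝ}
    [SFinite μ] {ν : Measure Ω} [IsFiniteMeasure ν] {W : Ω → ℝ} (hW : Measurable W)
    (hμ : ∀ᵐ t ∂μ, |t| < 1) (hlog : Integrable (fun t => -log (1 - |t|)) μ)
    (hν : ∀ᵐ ω ∂ν, |W ω| ≤ 1) :
    HasSum (fun n : ℕ => (-1) ^ n / (n + 1) * (∫ t, t ^ (n + 1) ∂μ) * ∫ ω, W ω ^ (n + 1) ∂ν)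
      (∫ p, log (1 + p.1 * W p.2) ∂μ.prod ν) := by
  have hμ' : ∀ᵐ p ∂μ.prod ν, |p.1| < 1 := Measure.quasiMeasurePreserving_fst.ae hμ
  have hν' : ∀ᵐ p ∂μ.prod ν, |W p.2| ≤ 1 := Measure.quasiMeasurePreserving_snd.ae hν
  have hbound : ∀ᵐ p ∂μ.prod ν,
      HasSum (fun n : ℕ => |p.1| ^ (n + 1) / ((n : ℝ) + 1)) (-log (1 - |p.1|)) := by
    filter_upwards [hμ'] with p hp
    exact hasSum_pow_div_log_of_abs_lt_one (by rwa [abs_abs])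
  have hprod : ∀ᵐ p ∂μ.prod ν, |p.1 * W p.2| ≤ |p.1| := by
    filter_upwards [hν'] with p hp
    rw [abs_mul]
    exact mul_le_of_le_one_right (abs_nonneg _) hp
  have hterm (n : ℕ) : ∫ p, (-1) ^ n * (p.1 * W p.2) ^ (n + 1) / ((n : ℝ) + 1) ∂μ.prod ν =
      (-1) ^ n / (n + 1) * (∫ t, t ^ (n + 1) ∂μ) * ∫ ω, W ω ^ (n + 1) ∂ν := by
    rw [mul_assoc, ← integral_prod_mul, ← integral_const_mul]
    congr 1 with p
    ring
  simp_rw [← hterm]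
  refine hasSum_integral_of_dominated_convergence (fun n p => |p.1| ^ (n + 1) / ((n : ℝ) + 1))
    (fun n => by fun_prop) (fun n => ?_) (hbound.mono fun p hp => hp.summable) ?_ ?_
  · filter_upwards [hprod] with p hp
    simp only [norm_div, norm_mul, norm_pow, norm_neg, norm_one, one_pow, one_mul, Real.norm_eq_abs]
    rw [abs_of_pos (by positivity : (0 : ℝ) < n + 1), ← abs_mul]
    gcongr
  · refine (hlog.comp_fst ν).congr ?_
    filter_upwards [hbound] with p hp using hp.tsum_eq.symm
  · filter_upwards [hμ', hprod] with p h₁ h₂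
    exact hasSum_log_one_add_of_abs_lt_one (h₂.trans_lt h₁)

theorem hasSum_integral_log_one_add_mul_mul {μ ρ σ : Measure ℝ} [SFinite μ]
    [IsFiniteMeasure ρ] [IsFiniteMeasure σ] (hμ : ∀ᵐ t ∂μ, |t| < 1)
    (hlog : Integrable (fun t => -log (1 - |t|)) μ) (hρ : ∀ᵐ x ∂ρ, |x| ≤ 1)
    (hσ : ∀ᵐ x ∂σ, |x| ≤ 1) :
    HasSum (fun n : ℕ => (-1) ^ n / (n + 1) * (∫ t, t ^ (n + 1) ∂μ) *
        ((∫ x, x ^ (n + 1) ∂ρ) * ∫ x, x ^ (n + 1) ∂σ))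
      (∫ ω : ℝ × ℝ × ℝ, log (1 + ω.1 * ω.2.1 * ω.2.2) ∂μ.prod (ρ.prod σ)) := by
  have hW : ∀ᵐ q ∂ρ.prod σ, |q.1 * q.2| ≤ 1 := by
    filter_upwards [Measure.quasiMeasurePreserving_fst.ae hρ,
      Measure.quasiMeasurePreserving_snd.ae hσ] with q h₁ h₂
    rw [abs_mul]
    exact mul_le_one₀ h₁ (abs_nonneg _) h₂
  convert hasSum_integral_log_one_add_mul (by fun_prop) hμ hlog hW using 1
  · ext n
    rw [← integral_prod_mul (fun x : ℝ => x ^ (n + 1)) (fun x : ℝ => x ^ (n + 1))]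
    simp_rw [mul_pow]
  · simp_rw [mul_assoc]

theorem MeasureTheory.MeasurePreserving.integral_prod_comp_snd {α β γ E : Type*}
    [MeasurableSpace α] [MeasurableSpace β] [MeasurableSpace γ] [NormedAddCommGroup E]
    [NormedSpace ℝ E] {μ : Measure α} {ν : Measure β} {ν' : Measure γ} [SFinite μ] [SFinite ν]
    {f : β → γ} (hf : MeasurePreserving f ν ν') {g : α × γ → E}
    (hg : AEStronglyMeasurable g (μ.prod ν')) :
    ∫ p, g (p.1, f p.2) ∂μ.prod ν = ∫ p, g p ∂μ.prod ν' := by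
  have h := (MeasurePreserving.id μ).prod hf
  rw [← h.map_eq] at hg ⊢
  exact (integral_map h.measurable.aemeasurable hg).symm

theorem hasSum_integral_log_combination {μ ρ σ : Measure ℝ} [SFinite μ]
    [IsProbabilityMeasure ρ] [IsProbabilityMeasure σ] (hμ : ∀ᵐ t ∂μ, |t| < 1)
    (hlog : Integrable (fun t => -log (1 - |t|)) μ) (hρ : ∀ᵐ x ∂ρ, |x| ≤ 1)
    (hσ : ∀ᵐ x ∂σ, |x| ≤ 1) :
    HasSum (fun n : ℕ => (-1) ^ n / (n + 1) * (∫ t, t ^ (n + 1) ∂μ) *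
        ((∫ x, x ^ (n + 1) ∂ρ) - ∫ x, x ^ (n + 1) ∂σ) ^ 2)
      ((∫ ω : ℝ × ℝ × ℝ × ℝ × ℝ, log (1 + ω.1 * ω.2.1 * ω.2.2.1)
          ∂μ.prod (ρ.prod (ρ.prod (σ.prod σ)))) -
        2 * ∫ ω : ℝ × ℝ × ℝ × ℝ × ℝ, log (1 + ω.1 * ω.2.1 * ω.2.2.2.1)
          ∂μ.prod (ρ.prod (ρ.prod (σ.prod σ))) +
        ∫ ω : ℝ × ℝ × ℝ × ℝ × ℝ, log (1 + ω.1 * ω.2.2.2.1 * ω.2.2.2.2)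
          ∂μ.prod (ρ.prod (ρ.prod (σ.prod σ)))) := by
  have hρρ : MeasurePreserving (fun q : ℝ × ℝ × ℝ × ℝ => (q.1, q.2.1))
      (ρ.prod (ρ.prod (σ.prod σ))) (ρ.prod ρ) :=
    (MeasurePreserving.id ρ).prod measurePreserving_fst
  have hρσ : MeasurePreserving (fun q : ℝ × ℝ × ℝ × ℝ => (q.1, q.2.2.1))
      (ρ.prod (ρ.prod (σ.prod σ))) (ρ.prod σ) :=
    (MeasurePreserving.id ρ).prod (measurePreserving_fst.comp measurePreserving_snd)
  have hσσ : MeasurePreserving (fun q : ℝ × ℝ × ℝ × ℝ => (q.2.2.1, q.2.2.2))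
      (ρ.prod (ρ.prod (σ.prod σ))) (σ.prod σ) :=
    measurePreserving_snd.comp measurePreserving_snd
  have hlog_meas : Measurable fun ω : ℝ × ℝ × ℝ => log (1 + ω.1 * ω.2.1 * ω.2.2) := by fun_prop
  have hρρ_marginal := hρρ.integral_prod_comp_snd (μ := μ) hlog_meas.aestronglyMeasurable
  have hρσ_marginal := hρσ.integral_prod_comp_snd (μ := μ) hlog_meas.aestronglyMeasurable
  have hσσ_marginal := hσσ.integral_prod_comp_snd (μ := μ) hlog_meas.aestronglyMeasurable
  simp only at hρρ_marginal hρσ_marginal hσσ_marginal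
  rw [hρρ_marginal, hρσ_marginal, hσσ_marginal]
  exact ((hasSum_integral_log_one_add_mul_mul hμ hlog hρ hρ).sub
    ((hasSum_integral_log_one_add_mul_mul hμ hlog hρ hσ).mul_left 2)).add
    (hasSum_integral_log_one_add_mul_mul hμ hlog hσ hσ) |>.congr_fun fun n => by ring

/-- Let `T ~ μT` be symmetric with `|T| < 1` a.s. and `E[-log(1-|T|)] < ∞`, let
`U₁, U₂ ~ μU` and `V₁, V₂ ~ μV` take values in `[-1,1]`, all mutually independent
(modelled by the product measure with coordinates `ω.1 = T`, `ω.2.1 = U₁`,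
`ω.2.2.1 = U₂`, `ω.2.2.2.1 = V₁`, `ω.2.2.2.2 = V₂`). Then
`E[log(1+TU₁U₂)] - 2E[log(1+TU₁V₁)] + E[log(1+TV₁V₂)]
  = -∑_{n≥1} (1/(2n)) E[T^{2n}] (E[U₁^{2n}] - E[V₁^{2n}])²`, which is `≤ 0`. -/
theorem log_expansion_symmetric_bound (μT μU μV : Measure ℝ)
    [IsProbabilityMeasure μT] [IsProbabilityMeasure μU] [IsProbabilityMeasure μV]
    (hsym : Measure.map (fun x : ℝ => -x) μT = μT)
    (hT1 : ∀ᵐ x ∂μT, |x| < 1)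
    (hTlog : Integrable (fun x : ℝ => -Real.log (1 - |x|)) μT)
    (hU : ∀ᵐ x ∂μU, x ∈ Set.Icc (-1 : ℝ) 1)
    (hV : ∀ᵐ x ∂μV, x ∈ Set.Icc (-1 : ℝ) 1) :
    ((∫ ω : ℝ × ℝ × ℝ × ℝ × ℝ, Real.log (1 + ω.1 * ω.2.1 * ω.2.2.1)
        ∂(μT.prod (μU.prod (μU.prod (μV.prod μV)))) -
      2 * ∫ ω : ℝ × ℝ × ℝ × ℝ × ℝ, Real.log (1 + ω.1 * ω.2.1 * ω.2.2.2.1)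
        ∂(μT.prod (μU.prod (μU.prod (μV.prod μV)))) +
      ∫ ω : ℝ × ℝ × ℝ × ℝ × ℝ, Real.log (1 + ω.1 * ω.2.2.2.1 * ω.2.2.2.2)
        ∂(μT.prod (μU.prod (μU.prod (μV.prod μV)))))
      = -∑' n : ℕ, (1 / (2 * ((n : ℝ) + 1))) * (∫ x : ℝ, x ^ (2 * (n + 1)) ∂μT) *
          ((∫ x : ℝ, x ^ (2 * (n + 1)) ∂μU) - ∫ x : ℝ, x ^ (2 * (n + 1)) ∂μV) ^ 2) ∧
    ((∫ ω : ℝ × ℝ × ℝ × ℝ × ℝ, Real.log (1 + ω.1 * ω.2.1 * ω.2.2.1)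
        ∂(μT.prod (μU.prod (μU.prod (μV.prod μV)))) -
      2 * ∫ ω : ℝ × ℝ × ℝ × ℝ × ℝ, Real.log (1 + ω.1 * ω.2.1 * ω.2.2.2.1)
        ∂(μT.prod (μU.prod (μU.prod (μV.prod μV)))) +
      ∫ ω : ℝ × ℝ × ℝ × ℝ × ℝ, Real.log (1 + ω.1 * ω.2.2.2.1 * ω.2.2.2.2)
        ∂(μT.prod (μU.prod (μU.prod (μV.prod μV)))))
      ≤ 0) := by
  have hU' : ∀ᵐ x ∂μU, |x| ≤ 1 := hU.mono fun x hx => abs_le.mpr hx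
  have hV' : ∀ᵐ x ∂μV, |x| ≤ 1 := hV.mono fun x hx => abs_le.mpr hx
  have : μT.IsNegInvariant := ⟨hsym⟩
  have hsum := HasSum.comp_two_mul_add_one_of_even_eq_zero
    (hasSum_integral_log_combination hT1 hTlog hU' hV')
    fun k => by simp [integral_pow_eq_zero_of_odd μT (odd_two_mul_add_one k)]
  have hcoeff (k : ℕ) :
      (-1 : ℝ) ^ (2 * k + 1) / ((2 * k + 1 : ℕ) + 1) = -(1 / (2 * ((k : ℝ) + 1))) := by
    rw [(odd_two_mul_add_one k).neg_one_pow]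
    push_cast
    ring
  simp only [hcoeff, show ∀ k, 2 * k + 1 + 1 = 2 * (k + 1) by omega, neg_mul] at hsum
  rw [← hsum.tsum_eq, tsum_neg]
  have hmoment (k : ℕ) : 0 ≤ ∫ x, x ^ (2 * (k + 1)) ∂μT :=
    integral_nonneg fun x => (even_two_mul _).pow_nonneg x
  exact ⟨rfl, neg_nonpos.mpr <| tsum_nonneg fun k =>
    mul_nonneg (mul_nonneg (by positivity) (hmoment k)) (sq_nonneg _)⟩
end

section
/- Let β > 0 and let s, L, K_1, K_2, L' be real numbers. Define ŝ = (1/β)·artanh(tanh(βK_1)·tanh(βK_2)·tanh(β(s+L))). Then Σ_{σ_1, σ_2, τ_1, τ_2 ∈ {-1,1}} exp(β(s+L)σ_1σ_2 + βK_1σ_1τ_1 + βK_2σ_2τ_2 + βL'τ_1τ_2) = 16 cosh(β(s+L)) cosh(βK_1) cosh(βK_2) cosh(β(ŝ+L')) / cosh(βŝ). -/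
open Real

/-!
Writing each Boltzmann weight as `exp (J σ τ) = cosh J + sinh J · σ τ` and expanding the product
over the four bonds of the plaquette `σ₁ σ₂ τ₂ τ₁`, the spin sum kills every monomial in which some
spin occurs an odd number of times, so only the empty bond set and the whole cycle survive:
the sum is `16 (∏ cosh + ∏ sinh)`. On the other side `cosh (x + y) / cosh x = cosh y + tanh x · sinh y`,
and `ŝ` is chosen precisely so that `tanh (β ŝ)` is the product of the three other tanh's.
-/

theorem artanh_eq_real_artanh {x : ℝ} (hx : x ∈ Set.Icc (-1) 1) :
    _root_.artanh x = Real.artanh x := by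
  rw [Real.artanh_eq_half_log hx, _root_.artanh]
  ring

theorem abs_tanh_mul_tanh_mul_tanh_lt_one (x y z : ℝ) : |tanh x * tanh y * tanh z| < 1 := by
  rw [abs_mul, abs_mul]
  exact mul_lt_one_of_nonneg_of_lt_one_right
    (mul_le_one₀ (abs_tanh_lt_one x).le (abs_nonneg _) (abs_tanh_lt_one y).le)
    (abs_nonneg _) (abs_tanh_lt_one z)

theorem exp_mul_spin_mul_spin (J : ℝ) (a b : Bool) :
    exp (J * spin a * spin b) = cosh J + sinh J * spin a * spin b := by
  cases a <;> cases b <;> simp [spin, cosh_add_sinh, ← sub_eq_add_neg, cosh_sub_sinh]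

theorem sum_exp_spin_four_cycle (a b c d : ℝ) :
    ∑ σ1 : Bool, ∑ σ2 : Bool, ∑ τ1 : Bool, ∑ τ2 : Bool,
      exp (a * spin σ1 * spin σ2 + b * spin σ1 * spin τ1 + c * spin σ2 * spin τ2 +
        d * spin τ1 * spin τ2) =
    16 * (cosh a * cosh b * cosh c * cosh d + sinh a * sinh b * sinh c * sinh d) := by
  simp only [exp_add, exp_mul_spin_mul_spin]
  simp only [Fintype.sum_bool, spin, if_true, Bool.false_eq_true, if_false]
  ring

theorem cosh_add_div_cosh (x y : ℝ) : cosh (x + y) / cosh x = cosh y + tanh x * sinh y := by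
  rw [cosh_add, tanh_eq_sinh_div_cosh]
  field_simp [(cosh_pos x).ne']

/-- Single-rung cavity recursion for the Ising model on a two-leg ladder: summing out the
two spins `σ₁, σ₂` of the boundary rung of a ladder with cavity coupling `s`, rung
coupling `L`, leg couplings `K₁, K₂` and next rung coupling `L'` produces the new cavity
coupling `ŝ = (1/β)·artanh(tanh(βK₁)·tanh(βK₂)·tanh(β(s+L)))` and the stated
multiplicative factor. -/
theorem ladder_cavity_recursion (β s L K1 K2 L' shat : ℝ) (hβ : 0 < β)
    (hshat : shat = (1 / β) *
      _root_.artanh (Real.tanh (β * K1) * Real.tanh (β * K2) * Real.tanh (β * (s + L)))) :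
    ∑ σ1 : Bool, ∑ σ2 : Bool, ∑ τ1 : Bool, ∑ τ2 : Bool,
      Real.exp (β * (s + L) * spin σ1 * spin σ2 + β * K1 * spin σ1 * spin τ1 +
        β * K2 * spin σ2 * spin τ2 + β * L' * spin τ1 * spin τ2) =
    16 * Real.cosh (β * (s + L)) * Real.cosh (β * K1) * Real.cosh (β * K2) *
      Real.cosh (β * (shat + L')) / Real.cosh (β * shat) := by
  set t := tanh (β * K1) * tanh (β * K2) * tanh (β * (s + L)) with ht
  have ht_mem : t ∈ Set.Ioo (-1) 1 := abs_lt.mp (abs_tanh_mul_tanh_mul_tanh_lt_one _ _ _)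
  have htanh : tanh (β * shat) = t := by
    rw [hshat, ← mul_assoc, mul_one_div_cancel hβ.ne', one_mul,
      artanh_eq_real_artanh (Set.Ioo_subset_Icc_self ht_mem), Real.tanh_artanh ht_mem]
  rw [sum_exp_spin_four_cycle, mul_add β shat, mul_div_assoc, cosh_add_div_cosh, htanh, ht]
  simp only [tanh_eq_sinh_div_cosh]
  field_simp [(cosh_pos (β * K1)).ne', (cosh_pos (β * K2)).ne', (cosh_pos (β * (s + L))).ne']
end
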